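/- arXiv:2003.13195 — 4 statements merged into one kernel-verified Lean document; each statement's English description precedes it below -/
import Mathlib

section
/- Let γ ∈ (0,1), a ∈ ℝ, b ≠ 0, c_z, c_u > 0, and let p be the unique positive solution of the DARE p = γa²p + c_z − γ²a²b²p²/(c_u + γb²p). Define g = −γb/(c_u + γb²p) and h = a(1 + bpg). Then √γ·|h| < 1, and in particular γ|h| < 1. -/
/-!
With the feedback `u = k x`, `k = a p g`, the closed loop is `x ↦ h x` where `h = a + b k`, and the
DARE is equivalent to the Lyapunov identity `p = c_z + c_u k² + γ h² p`. Since `c_z > 0` and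
`p > 0`, this forces `γ h² < 1`, i.e. `√γ |h| < 1`.
-/

lemma dare_rhs_eq_lyapunov {γ a b cz cu p g : ℝ} (hD : cu + γ * b ^ 2 * p ≠ 0)
    (hg : g = -γ * b / (cu + γ * b ^ 2 * p)) :
    γ * a ^ 2 * p + cz - γ ^ 2 * a ^ 2 * b ^ 2 * p ^ 2 / (cu + γ * b ^ 2 * p)
      = cz + cu * (a * p * g) ^ 2 + γ * (a * (1 + b * p * g)) ^ 2 * p := by
  subst hg
  generalize hDdef : cu + γ * b ^ 2 * p = D at *
  obtain rfl : cu = D - γ * b ^ 2 * p := by linarith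
  field_simp
  ring

lemma mul_sq_lt_one_of_lyapunov {γ h p c : ℝ} (hp : 0 < p) (hc : 0 < c)
    (hlyap : p = c + γ * h ^ 2 * p) : γ * h ^ 2 < 1 :=
  lt_of_mul_lt_mul_right (by linarith) hp.le

lemma Real.sqrt_mul_abs_lt_one {γ x : ℝ} (hγ : 0 ≤ γ) (h : γ * x ^ 2 < 1) :
    √γ * |x| < 1 := by
  rw [← Real.sqrt_sq_eq_abs, ← Real.sqrt_mul hγ, Real.sqrt_lt' one_pos]
  simpa using h

lemma mul_abs_lt_one_of_sqrt_mul_abs_lt_one {γ x : ℝ} (hγ : γ ≤ 1) (h : √γ * |x| < 1) :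
    γ * |x| < 1 :=
  (mul_le_mul_of_nonneg_right (Real.le_sqrt_self_iff.2 hγ) (abs_nonneg x)).trans_lt h

theorem closed_loop_stable_general
    (γ a b cz cu p g h : ℝ)
    (hγ : γ ∈ Set.Ioo (0 : ℝ) 1) (hcz : 0 < cz) (hcu : 0 < cu)
    (hp : 0 < p)
    (hDARE : p = γ * a ^ 2 * p + cz
        - γ ^ 2 * a ^ 2 * b ^ 2 * p ^ 2 / (cu + γ * b ^ 2 * p))
    (hg : g = -γ * b / (cu + γ * b ^ 2 * p))
    (hh : h = a * (1 + b * p * g)) :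
    Real.sqrt γ * |h| < 1 ∧ γ * |h| < 1 := by
  obtain ⟨hγ0, hγ1⟩ := hγ
  have hD : cu + γ * b ^ 2 * p ≠ 0 := by positivity
  rw [dare_rhs_eq_lyapunov hD hg, ← hh] at hDARE
  have hc : 0 < cz + cu * (a * p * g) ^ 2 := by positivity
  have hstable : √γ * |h| < 1 :=
    Real.sqrt_mul_abs_lt_one hγ0.le (mul_sq_lt_one_of_lyapunov hp hc hDARE)
  exact ⟨hstable, mul_abs_lt_one_of_sqrt_mul_abs_lt_one hγ1.le hstable⟩

/-- Closed-loop stability of the discounted LQR: √γ·|h| < 1 and γ·|h| < 1. -/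
theorem closed_loop_stable
    (γ a b cz cu p g h : ℝ)
    (hγ : γ ∈ Set.Ioo (0 : ℝ) 1) (hb : b ≠ 0) (hcz : 0 < cz) (hcu : 0 < cu)
    (hp : 0 < p)
    (hDARE : p = γ * a ^ 2 * p + cz
        - γ ^ 2 * a ^ 2 * b ^ 2 * p ^ 2 / (cu + γ * b ^ 2 * p))
    (hpuniq : ∀ q : ℝ, 0 < q →
        q = γ * a ^ 2 * q + cz - γ ^ 2 * a ^ 2 * b ^ 2 * q ^ 2 / (cu + γ * b ^ 2 * q)
        → q = p)
    (hg : g = -γ * b / (cu + γ * b ^ 2 * p))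
    (hh : h = a * (1 + b * p * g)) :
    Real.sqrt γ * |h| < 1 ∧ γ * |h| < 1 :=
  closed_loop_stable_general γ a b cz cu p g h hγ hcz hcu hp hDARE hg hh
end

section
/- Call a sequence x : ℕ → ℝ a τ-latent LTI sequence with constant r if x_{t+1} = r·x_t for all t ≥ τ. If x is a τ-latent LTI sequence with constant r satisfying |r| ≤ 1, then for all t ≥ τ, the mean-field update x' = 𝒯(x) satisfies x'_{t+1} = r̂·x_t where r̂ = h − c_z b g r/(1 − γhr). -/
/-- If x is τ-latent LTI with constant r, |r| ≤ 1, then for t ≥ τ the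
mean-field update satisfies (𝒯x)_{t+1} = r̂ x_t with r̂ = h − c_z b g r/(1−γhr). -/
theorem latent_update_gain
    (h γ cz b g ν₀ r : ℝ) (hγ : γ ∈ Set.Ioo (0 : ℝ) 1) (hstab : γ * |h| < 1)
    (T : (ℕ → ℝ) → (ℕ → ℝ))
    (hT0 : ∀ z : ℕ → ℝ, T z 0 = ν₀)
    (hTs : ∀ (z : ℕ → ℝ) (t : ℕ),
      T z (t + 1) = h * z t - cz * b * g * ∑' s : ℕ, (γ * h) ^ s * z (t + 1 + s))
    (x : ℕ → ℝ) (τ : ℕ) (hr : |r| ≤ 1)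
    (hlat : ∀ t : ℕ, τ ≤ t → x (t + 1) = r * x t) :
    ∀ t : ℕ, τ ≤ t →
      T x (t + 1) = (h - cz * b * g * r / (1 - γ * h * r)) * x t := by
  intro t ht
  have hx : ∀ s : ℕ, x (t + 1 + s) = r ^ (s + 1) * x t := by
    intro s
    induction s with
    | zero => simpa using hlat t ht
    | succ n ih =>
      have : t + 1 + (n + 1) = (t + 1 + n) + 1 := by ring
      rw [this, hlat _ (by omega), ih]
      ring
  have hnorm : ‖γ * h * r‖ < 1 := by
    have h1 : |γ * h * r| ≤ γ * |h| * 1 := by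
      rw [abs_mul, abs_mul, abs_of_pos hγ.1]
      exact mul_le_mul_of_nonneg_left hr (mul_nonneg hγ.1.le (abs_nonneg _))
    rw [Real.norm_eq_abs]
    calc |γ * h * r| ≤ γ * |h| * 1 := h1
      _ = γ * |h| := mul_one _
      _ < 1 := hstab
  have hne : 1 - γ * h * r ≠ 0 := by
    intro hc
    have h2 : γ * h * r = 1 := by linarith
    rw [Real.norm_eq_abs, h2] at hnorm
    simp at hnorm
  have hsum : ∑' s : ℕ, (γ * h) ^ s * x (t + 1 + s)
      = r / (1 - γ * h * r) * x t := by
    have : ∀ s : ℕ, (γ * h) ^ s * x (t + 1 + s) = (γ * h * r) ^ s * (r * x t) := by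
      intro s; rw [hx s, mul_pow, pow_succ]; ring
    rw [tsum_congr this, tsum_mul_right, tsum_geometric_of_norm_lt_one hnorm]
    field_simp
  rw [hTs x t, hsum]
  field_simp
end

section
/- Let x : ℕ → ℝ be a τ-latent LTI sequence with constant r, |r| ≤ 1 (i.e., x_{t+1} = r x_t for all t ≥ τ). Then x' = 𝒯(x) is a (τ+1)-latent LTI sequence with the same constant r, i.e., x'_{t+1} = r·x'_t for all t ≥ τ+1. -/
/-- The mean-field update of a τ-latent LTI sequence with constant r (|r| ≤ 1)
is a (τ+1)-latent LTI sequence with the same constant r. -/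
theorem latent_preserved
    (h γ cz b g ν₀ r : ℝ) (hγ : γ ∈ Set.Ioo (0 : ℝ) 1) (hstab : γ * |h| < 1)
    (T : (ℕ → ℝ) → (ℕ → ℝ))
    (hT0 : ∀ z : ℕ → ℝ, T z 0 = ν₀)
    (hTs : ∀ (z : ℕ → ℝ) (t : ℕ),
      T z (t + 1) = h * z t - cz * b * g * ∑' s : ℕ, (γ * h) ^ s * z (t + 1 + s))
    (x : ℕ → ℝ) (τ : ℕ) (hr : |r| ≤ 1)
    (hlat : ∀ t : ℕ, τ ≤ t → x (t + 1) = r * x t) :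
    ∀ t : ℕ, τ + 1 ≤ t → T x (t + 1) = r * T x t := by
  intro t ht
  obtain ⟨u, rfl⟩ : ∃ u, t = u + 1 := ⟨t - 1, by omega⟩
  have hu : τ ≤ u := by omega
  rw [hTs, hTs]
  have hx1 : x (u + 1) = r * x u := hlat u hu
  have hx2 : ∀ s : ℕ, x (u + 1 + 1 + s) = r * x (u + 1 + s) := by
    intro s
    have : u + 1 + 1 + s = (u + 1 + s) + 1 := by omega
    rw [this, hlat (u + 1 + s) (by omega)]
  have hsum : (∑' s : ℕ, (γ * h) ^ s * x (u + 1 + 1 + s))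
      = r * ∑' s : ℕ, (γ * h) ^ s * x (u + 1 + s) := by
    rw [← tsum_mul_left]
    congr 1
    funext s
    rw [hx2 s]; ring
  rw [hx1, hsum]
  ring
end

section
/- Let x be a k-latent LTI sequence with constant r, |r| ≤ 1, γ ∈ (0,1), γ|h| < 1, |γhr| < 1. Then for t ≥ k, Σ_{s=0}^∞ (γh)^s x_{t+1+s} = r^{t−k+1}·x_k/(1 − γhr), and for t < k, Σ_{s=0}^∞ (γh)^s x_{t+1+s} = Σ_{s=0}^{k−t−1} (γh)^s x_{t+1+s} + (γh)^{k−t}·r·x_k/(1 − γhr). -/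
/-- Closed-form expressions for the co-state sums of a k-latent LTI sequence. -/
theorem latent_costate_sums
    (γ h r : ℝ) (hγ : γ ∈ Set.Ioo (0 : ℝ) 1) (hstab : γ * |h| < 1)
    (hr : |r| ≤ 1) (hγhr : |γ * h * r| < 1)
    (x : ℕ → ℝ) (k : ℕ)
    (hlat : ∀ t : ℕ, k ≤ t → x (t + 1) = r * x t) :
    (∀ t : ℕ, k ≤ t →
      (∑' s : ℕ, (γ * h) ^ s * x (t + 1 + s))
        = r ^ (t - k + 1) * x k / (1 - γ * h * r)) ∧
    (∀ t : ℕ, t < k →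
      (∑' s : ℕ, (γ * h) ^ s * x (t + 1 + s))
        = (∑ s ∈ Finset.range (k - t), (γ * h) ^ s * x (t + 1 + s))
          + (γ * h) ^ (k - t) * r * x k / (1 - γ * h * r)) := by
  have hx : ∀ j : ℕ, x (k + j) = r ^ j * x k := by
    intro j
    induction j with
    | zero => simp
    | succ j ih =>
      have h1 : x (k + j + 1) = r * x (k + j) := hlat (k + j) (Nat.le_add_right _ _)
      have h2 : k + (j + 1) = k + j + 1 := by omega
      rw [h2, h1, ih, pow_succ]
      ring
  have hq : ‖γ * h * r‖ < 1 := by rwa [Real.norm_eq_abs]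
  have hgeo : ∑' s : ℕ, (γ * h * r) ^ s = (1 - γ * h * r)⁻¹ :=
    tsum_geometric_of_norm_lt_one hq
  have hsum : Summable (fun s : ℕ => (γ * h * r) ^ s) :=
    summable_geometric_of_norm_lt_one hq
  constructor
  · intro t ht
    have key : ∀ s : ℕ, (γ * h) ^ s * x (t + 1 + s)
        = (γ * h * r) ^ s * (r ^ (t - k + 1) * x k) := by
      intro s
      have h1 : t + 1 + s = k + (t - k + 1 + s) := by omega
      rw [h1, hx (t - k + 1 + s), pow_add, mul_pow]
      ring
    calc ∑' s : ℕ, (γ * h) ^ s * x (t + 1 + s)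
        = ∑' s : ℕ, (γ * h * r) ^ s * (r ^ (t - k + 1) * x k) := tsum_congr key
      _ = (∑' s : ℕ, (γ * h * r) ^ s) * (r ^ (t - k + 1) * x k) := tsum_mul_right
      _ = r ^ (t - k + 1) * x k / (1 - γ * h * r) := by
          rw [hgeo, div_eq_mul_inv]; ring
  · intro t ht
    set n := k - t with hn
    have htail : ∀ s : ℕ, (γ * h) ^ (s + n) * x (t + 1 + (s + n))
        = (γ * h * r) ^ s * ((γ * h) ^ n * (r * x k)) := by
      intro s
      have h1 : t + 1 + (s + n) = k + (s + 1) := by omega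
      rw [h1, hx (s + 1), pow_add (γ * h) s n, pow_succ, mul_pow]
      ring
    have hf : Summable (fun s : ℕ => (γ * h) ^ s * x (t + 1 + s)) := by
      rw [← summable_nat_add_iff n]
      simp only [htail]
      exact hsum.mul_right _
    rw [← Summable.sum_add_tsum_nat_add n hf]
    congr 1
    calc ∑' s : ℕ, (γ * h) ^ (s + n) * x (t + 1 + (s + n))
        = ∑' s : ℕ, (γ * h * r) ^ s * ((γ * h) ^ n * (r * x k)) := tsum_congr htail
      _ = (∑' s : ℕ, (γ * h * r) ^ s) * ((γ * h) ^ n * (r * x k)) := tsum_mul_right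
      _ = (γ * h) ^ n * r * x k / (1 - γ * h * r) := by
          rw [hgeo, div_eq_mul_inv]; ring
end
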